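/- arXiv:2401.15939 — 8 statements merged into one kernel-verified Lean document; each statement's English description precedes it below -/
import Mathlib

section
/- For every integer ℓ ≥ 1, the map sending x ∈ {0,1}^n to the vector (Tr(x)_1 mod 2, Tr(x)_2 mod 2, ..., Tr(x)_n mod 2) of the first n entries of its ℓ-read vector taken modulo 2 is injective; likewise the map sending x to the last n entries of Tr(x) taken modulo 2 is injective. -/
/-!
Write `P m` for the weight of the first `m` bits of `x`. Entry `i` of `Tr(x)` is
`P (i + 1) - P (i + 1 - ℓ)`, so modulo 2 the first `n` entries determine every parity `P m % 2`
(`m ≤ n`) by strong induction, and these parities determine `x` bit by bit. Reading `x`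
backwards reverses its read vector, which turns the last `n` entries into the first `n`.
-/

/-- The ℓ-read vector of a binary vector `x` (as a list of Booleans): its entry at 0-based
index `i` (1-indexed `i+1`) is the Hamming weight of the window of `ℓ` consecutive
coordinates of `x` ending at 1-indexed position `i+1`, with out-of-range coordinates taken
to be `0` (`false`). -/
def readVec (ℓ : ℕ) (x : List Bool) : List ℕ :=
  (List.range (x.length + ℓ - 1)).map fun i =>
    (((List.replicate (ℓ - 1) false ++ x ++ List.replicate (ℓ - 1) false).drop i).take ℓ).count true

theorem List.take_drop_reverse {α : Type*} (l : List α) {i k : ℕ} (h : i + k ≤ l.length) :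
    (l.reverse.drop i).take k = ((l.drop (l.length - (i + k))).take k).reverse := by
  rw [List.drop_reverse, List.take_reverse, List.drop_take, List.length_take,
    min_eq_left (by omega)]
  congr 3 <;> omega

theorem List.eq_of_count_take_mod_two :
    ∀ {x y : List Bool}, x.length = y.length →
      (∀ m ≤ x.length, (x.take m).count true % 2 = (y.take m).count true % 2) → x = y
  | [], [], _, _ => rfl
  | a :: x, b :: y, hlen, h => by
    have hcons : ∀ m ≤ x.length, ((a :: x).take (m + 1)).count true % 2 =
        ((b :: y).take (m + 1)).count true % 2 := fun m hm => h (m + 1) (by simpa using hm)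
    simp only [List.take_succ_cons, List.count_cons] at hcons
    have hab : a = b := by
      have := hcons 0 (Nat.zero_le _)
      cases a <;> cases b <;> simp_all
    subst hab
    refine congrArg _ (List.eq_of_count_take_mod_two (by simpa using hlen) fun m hm => ?_)
    have := hcons m hm
    omega

theorem length_readVec (ℓ : ℕ) (x : List Bool) :
    (readVec ℓ x).length = x.length + ℓ - 1 := by
  simp [readVec]

theorem readVec_reverse (ℓ : ℕ) (x : List Bool) :
    readVec ℓ x.reverse = (readVec ℓ x).reverse := by
  apply List.ext_getElem (by simp [length_readVec])
  intro i h₁ h₂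
  rcases Nat.eq_zero_or_pos ℓ with rfl | hℓ
  · simp [readVec]
  simp only [length_readVec, List.length_reverse] at h₁
  have hpad : List.replicate (ℓ - 1) false ++ x.reverse ++ List.replicate (ℓ - 1) false =
      (List.replicate (ℓ - 1) false ++ x ++ List.replicate (ℓ - 1) false).reverse := by
    simp
  simp only [readVec, List.getElem_map, List.getElem_range, List.getElem_reverse, List.length_map,
    List.length_range, List.length_reverse, hpad]
  have hlen : (List.replicate (ℓ - 1) false ++ x ++ List.replicate (ℓ - 1) false).length =
      x.length + 2 * (ℓ - 1) := by
    simp only [List.length_append, List.length_replicate]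
    omega
  rw [List.take_drop_reverse _ (by omega), List.count_reverse, hlen]
  congr 3
  omega

theorem count_true_take_pad (m k : ℕ) (x : List Bool) :
    ((List.replicate m false ++ x ++ List.replicate m false).take k).count true =
      (x.take (k - m)).count true := by
  simp [List.take_append, List.count_append, List.take_replicate, List.count_replicate]

theorem readVec_getElem_add_count_take {ℓ : ℕ} (hℓ : 1 ≤ ℓ) (x : List Bool) (i : ℕ)
    (hi : i < (readVec ℓ x).length) :
    (readVec ℓ x)[i] + (x.take (i + 1 - ℓ)).count true = (x.take (i + 1)).count true := by
  have hsplit := congrArg (List.count true)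
    (List.take_add (l := List.replicate (ℓ - 1) false ++ x ++ List.replicate (ℓ - 1) false)
      (i := i) (j := ℓ))
  rw [List.count_append, count_true_take_pad, count_true_take_pad,
    show i + ℓ - (ℓ - 1) = i + 1 by omega, show i - (ℓ - 1) = i + 1 - ℓ by omega] at hsplit
  simp only [readVec, List.getElem_map, List.getElem_range]
  omega

theorem eq_of_readVec_take_mod_two_eq {ℓ : ℕ} (hℓ : 1 ≤ ℓ) {x y : List Bool}
    (hlen : x.length = y.length)
    (h : ((readVec ℓ x).take x.length).map (· % 2) =
      ((readVec ℓ y).take y.length).map (· % 2)) :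
    x = y := by
  have hentry : ∀ i (hi : i < x.length), (readVec ℓ x)[i]'(by rw [length_readVec]; omega) % 2 =
      (readVec ℓ y)[i]'(by rw [length_readVec]; omega) % 2 := fun i hi => by
    simpa using List.getElem_of_eq h (i := i)
      (by simp only [List.length_map, List.length_take, length_readVec]; omega)
  refine List.eq_of_count_take_mod_two hlen fun m => ?_
  induction m using Nat.strong_induction_on with
  | _ m ih =>
    intro hm
    rcases m with _ | i
    · simp
    have hx := readVec_getElem_add_count_take hℓ x i (by rw [length_readVec]; omega)
    have hy := readVec_getElem_add_count_take hℓ y i (by rw [length_readVec]; omega)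
    have := hentry i (by omega)
    have := ih (i + 1 - ℓ) (by omega) (by omega)
    omega

theorem drop_readVec_eq_reverse_take (ℓ : ℕ) (x : List Bool) :
    (readVec ℓ x).drop (ℓ - 1) = ((readVec ℓ x.reverse).take x.length).reverse := by
  rw [readVec_reverse, List.take_reverse, List.reverse_reverse, length_readVec]
  congr 1
  omega

/-- For every `ℓ ≥ 1`, the map sending `x ∈ {0,1}ⁿ` to the first `n`
entries of its `ℓ`-read vector taken modulo 2 is injective; likewise the map sending `x`
to the last `n` entries of `Tr(x)` taken modulo 2 is injective. (The read vector has
length `n+ℓ-1`, so the last `n` entries are obtained by dropping the first `ℓ-1`.) -/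
theorem readVec_mod_two_injective (ℓ : ℕ) (hℓ : 1 ≤ ℓ) (n : ℕ) :
    (∀ x y : List Bool, x.length = n → y.length = n →
      ((readVec ℓ x).take n).map (· % 2) = ((readVec ℓ y).take n).map (· % 2) → x = y) ∧
    (∀ x y : List Bool, x.length = n → y.length = n →
      ((readVec ℓ x).drop (ℓ - 1)).map (· % 2) = ((readVec ℓ y).drop (ℓ - 1)).map (· % 2) →
        x = y) := by
  refine ⟨fun x y hx hy h =>
    eq_of_readVec_take_mod_two_eq hℓ (hx.trans hy.symm) (by rwa [hx, hy]),
    fun x y hx hy h => ?_⟩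
  rw [drop_readVec_eq_reverse_take, drop_readVec_eq_reverse_take, List.map_reverse,
    List.map_reverse, List.reverse_inj] at h
  exact List.reverse_injective <|
    eq_of_readVec_take_mod_two_eq hℓ (by simp [hx, hy]) (by simpa using h)
end

section
/- Let ℓ ≥ 1 and let x, y ∈ {0,1}^n. Suppose a vector R' of length n+ℓ-2 lies in both D(Tr(x)) and D(Tr(y)), and suppose there exists an index i ∈ [n+ℓ-3] such that |R'_{i+1} − R'_i| > 1. Then x = y. (That is, a single deletion in an ℓ-read vector that creates a jump of magnitude greater than 1 between consecutive entries determines the original input uniquely.) -/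
/-- The single-deletion ball: all vectors obtained from `u` by deleting exactly one symbol. -/
def delBall {α : Type*} (u : List α) : Set (List α) :=
  { v | ∃ i < u.length, v = u.eraseIdx i }

namespace DelReadVecAux

/-- The padded vector. -/
def pad (ℓ : ℕ) (x : List Bool) : List Bool :=
  List.replicate (ℓ - 1) false ++ x ++ List.replicate (ℓ - 1) false

/-- 0/1 indicator of the padded vector at index `k` (out of range = 0). -/
def bfun (ℓ : ℕ) (x : List Bool) (k : ℕ) : ℕ := if (pad ℓ x).getD k false then 1 else 0

/-- Window sum starting at `i`. -/
def ffun (ℓ : ℕ) (x : List Bool) (i : ℕ) : ℕ := ∑ j ∈ Finset.range ℓ, bfun ℓ x (i + j)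

lemma count_take (l : List Bool) (m : ℕ) :
    (l.take m).count true = ∑ j ∈ Finset.range m, (if l.getD j false then 1 else 0) := by
  induction m with
  | zero => simp
  | succ m ih =>
    rw [List.take_succ, List.count_append, ih, Finset.sum_range_succ]
    congr 1
    rw [List.getD_eq_getElem?_getD]
    cases h : l[m]? with
    | none => simp [h]
    | some b => cases b <;> simp [h]

lemma pad_length (ℓ : ℕ) (x : List Bool) : (pad ℓ x).length = x.length + 2 * (ℓ - 1) := by
  simp [pad]; omega

lemma readVec_length (ℓ : ℕ) (x : List Bool) :
    (readVec ℓ x).length = x.length + ℓ - 1 := by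
  simp [readVec]

lemma readVec_getD (ℓ : ℕ) (x : List Bool) {i : ℕ} (h : i < x.length + ℓ - 1) :
    (readVec ℓ x).getD i 0 = ffun ℓ x i := by
  have hlen : i < (readVec ℓ x).length := by rw [readVec_length]; exact h
  rw [List.getD_eq_getElem _ _ hlen]
  have : (readVec ℓ x)[i] = (((pad ℓ x).drop i).take ℓ).count true := by
    simp [readVec, pad, h]
  rw [this, count_take, ffun]
  refine Finset.sum_congr rfl fun j _ => ?_
  rw [bfun, List.getD_eq_getElem?_getD, List.getD_eq_getElem?_getD, List.getElem?_drop]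

lemma bfun_le (ℓ : ℕ) (x : List Bool) (k : ℕ) : bfun ℓ x k ≤ 1 := by
  rw [bfun]; split <;> simp

lemma bfun_pad_lt (ℓ : ℕ) (x : List Bool) {k : ℕ} (hk : k < ℓ - 1) : bfun ℓ x k = 0 := by
  rw [bfun, pad, List.getD_eq_getElem?_getD, List.append_assoc,
    List.getElem?_append_left (by simpa using hk), List.getElem?_replicate, if_pos hk]
  simp

lemma bfun_ge (ℓ : ℕ) (x : List Bool) {k : ℕ} (hk : x.length + 2 * (ℓ - 1) ≤ k) :
    bfun ℓ x k = 0 := by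
  rw [bfun, List.getD_eq_default _ _ (by rw [pad_length]; exact hk)]
  simp

lemma step (ℓ : ℕ) (x : List Bool) (i : ℕ) :
    ffun ℓ x (i + 1) + bfun ℓ x i = ffun ℓ x i + bfun ℓ x (i + ℓ) := by
  have h1 : ∑ j ∈ Finset.range (ℓ + 1), bfun ℓ x (i + j)
      = ffun ℓ x (i + 1) + bfun ℓ x i := by
    rw [Finset.sum_range_succ', Nat.add_zero]
    congr 1
    exact Finset.sum_congr rfl fun j _ => by rw [show i + (j + 1) = (i + 1) + j from by omega]
  have h2 : ∑ j ∈ Finset.range (ℓ + 1), bfun ℓ x (i + j)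
      = ffun ℓ x i + bfun ℓ x (i + ℓ) := Finset.sum_range_succ _ _
  omega

lemma ffun_zero (ℓ : ℕ) (hℓ : 1 ≤ ℓ) (x : List Bool) :
    ffun ℓ x 0 = bfun ℓ x (ℓ - 1) := by
  obtain ⟨m, rfl⟩ : ∃ m, ℓ = m + 1 := ⟨ℓ - 1, by omega⟩
  rw [ffun, Finset.sum_range_succ, Finset.sum_eq_zero, zero_add, Nat.zero_add]
  · congr 1
  · intro j hj
    rw [Nat.zero_add]
    exact bfun_pad_lt _ _ (by simp at hj; omega)

/-- The window sums determine the word. -/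
lemma inj (ℓ : ℕ) (hℓ : 1 ≤ ℓ) (x y : List Bool) (hlen : y.length = x.length)
    (hn : 1 ≤ x.length)
    (hf : ∀ i, i < x.length + ℓ - 1 → ffun ℓ x i = ffun ℓ y i) : x = y := by
  have key : ∀ k, bfun ℓ x k = bfun ℓ y k := by
    intro k
    induction k using Nat.strong_induction_on with
    | _ k ih =>
      rcases lt_or_ge k (ℓ - 1) with hk | hk
      · rw [bfun_pad_lt _ _ hk, bfun_pad_lt _ _ hk]
      rcases eq_or_lt_of_le hk with hk1 | hk1
      · rw [← hk1, ← ffun_zero ℓ hℓ x, ← ffun_zero ℓ hℓ y]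
        exact hf 0 (by omega)
      rcases lt_or_ge k (x.length + 2 * (ℓ - 1)) with hk2 | hk2
      · have hkℓ : ℓ ≤ k := by omega
        set i := k - ℓ with hidef
        have hkeq : k = i + ℓ := by omega
        have sx := step ℓ x i
        have sy := step ℓ y i
        have e1 := hf i (by omega)
        have e2 := hf (i + 1) (by omega)
        have e3 := ih i (by omega)
        rw [hkeq]
        omega
      · rw [bfun_ge _ _ hk2, bfun_ge _ _ (by omega)]
  have hpad : pad ℓ x = pad ℓ y := by
    apply List.ext_getElem (by rw [pad_length, pad_length, hlen])
    intro k h1 h2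
    have hb := key k
    rw [bfun, bfun, List.getD_eq_getElem _ _ h1, List.getD_eq_getElem _ _ h2] at hb
    by_cases hx : (pad ℓ x)[k] <;> by_cases hy : (pad ℓ y)[k] <;> simp_all
  have hpad' : (List.replicate (ℓ - 1) false ++ x) ++ List.replicate (ℓ - 1) false
      = (List.replicate (ℓ - 1) false ++ y) ++ List.replicate (ℓ - 1) false := by
    simpa [pad, List.append_assoc] using hpad
  exact List.append_cancel_left (List.append_cancel_right hpad')

/-- Consecutive read-vector entries differ by at most one. -/
lemma smooth (ℓ : ℕ) (x : List Bool) {k : ℕ} (h : k + 1 < x.length + ℓ - 1) :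
    (readVec ℓ x).getD (k + 1) 0 ≤ (readVec ℓ x).getD k 0 + 1 ∧
    (readVec ℓ x).getD k 0 ≤ (readVec ℓ x).getD (k + 1) 0 + 1 := by
  rw [readVec_getD ℓ x (i := k + 1) h, readVec_getD ℓ x (i := k) (by omega)]
  have := step ℓ x k
  have h1 := bfun_le ℓ x k
  have h2 := bfun_le ℓ x (k + ℓ)
  omega

/-- Reconstruction: if erasing index `j` from the read vector creates a jump of size ≥ 2
at position `i`, then `j = i+1` and the read vector is determined by `R`. -/
lemma reconstruct (ℓ : ℕ) (x : List Bool) (R : List ℕ) (j : ℕ)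
    (hj : j < (readVec ℓ x).length) (hR : R = (readVec ℓ x).eraseIdx j)
    (i : ℕ) (hi : i + 1 < R.length)
    (hjn : R.getD (i + 1) 0 ≥ R.getD i 0 + 2 ∨ R.getD i 0 ≥ R.getD (i + 1) 0 + 2) :
    (∀ k, k ≤ i → (readVec ℓ x).getD k 0 = R.getD k 0) ∧
    (2 * (readVec ℓ x).getD (i + 1) 0 = R.getD i 0 + R.getD (i + 1) 0) ∧
    (∀ k, i + 2 ≤ k → k < x.length + ℓ - 1 → (readVec ℓ x).getD k 0 = R.getD (k - 1) 0) := by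
  set T := readVec ℓ x with hT
  have hTlen : T.length = x.length + ℓ - 1 := readVec_length ℓ x
  have hRlen : R.length = T.length - 1 := by
    rw [hR, List.length_eraseIdx, if_pos hj]
  have hget : ∀ k, k < R.length → R.getD k 0 = if k < j then T.getD k 0 else T.getD (k + 1) 0 := by
    intro k hk
    have hk' : k < (T.eraseIdx j).length := by rw [← hR]; exact hk
    rw [hR, List.getD_eq_getElem _ _ hk', List.getElem_eraseIdx]
    split
    · rw [List.getD_eq_getElem _ _ (by omega)]
    · rw [List.getD_eq_getElem _ _ (by omega)]
  have hji : j = i + 1 := by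
    by_contra hne
    rcases lt_or_gt_of_ne hne with hlt | hgt
    · -- j ≤ i : both R_i, R_{i+1} are shifted entries
      have e1 : R.getD i 0 = T.getD (i + 1) 0 := by
        rw [hget i (by omega), if_neg (by omega)]
      have e2 : R.getD (i + 1) 0 = T.getD (i + 1 + 1) 0 := by
        rw [hget (i + 1) hi, if_neg (by omega)]
      have := smooth ℓ x (k := i + 1) (by omega)
      rw [← hT] at this
      omega
    · -- i + 1 < j : both unshifted
      have e1 : R.getD i 0 = T.getD i 0 := by
        rw [hget i (by omega), if_pos (by omega)]
      have e2 : R.getD (i + 1) 0 = T.getD (i + 1) 0 := by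
        rw [hget (i + 1) hi, if_pos (by omega)]
      have := smooth ℓ x (k := i) (by omega)
      rw [← hT] at this
      omega
  have e1 : R.getD i 0 = T.getD i 0 := by
    rw [hget i (by omega), if_pos (by omega)]
  have e2 : R.getD (i + 1) 0 = T.getD (i + 1 + 1) 0 := by
    rw [hget (i + 1) hi, if_neg (by omega)]
  have s1 := smooth ℓ x (k := i) (by omega)
  have s2 := smooth ℓ x (k := i + 1) (by omega)
  rw [← hT] at s1 s2
  refine ⟨fun k hk => ?_, by omega, fun k hk hk' => ?_⟩
  · rw [hget k (by omega), if_pos (by omega)]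
  · obtain ⟨m, rfl⟩ : ∃ m, k = m + 1 := ⟨k - 1, by omega⟩
    rw [Nat.add_sub_cancel, hget m (by omega), if_neg (by omega)]

end DelReadVecAux

open DelReadVecAux in
/-- Let `ℓ ≥ 1` and `x, y ∈ {0,1}ⁿ`. If a vector `R'` lies in both
`D(Tr(x))` and `D(Tr(y))` and there is an index `i` (0-indexed, with both positions `i`
and `i+1` valid in `R'`) such that `|R'_{i+1} − R'_i| > 1`, then `x = y`: such a deletion
determines the original input uniquely. -/
theorem del_readVec_jump_unique (ℓ : ℕ) (hℓ : 1 ≤ ℓ) (n : ℕ) (x y : List Bool)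
    (hx : x.length = n) (hy : y.length = n) (R : List ℕ)
    (hRx : R ∈ delBall (readVec ℓ x)) (hRy : R ∈ delBall (readVec ℓ y))
    (i : ℕ) (hi : i + 1 < R.length)
    (hjump : 1 < |(R.getD (i + 1) 0 : ℤ) - (R.getD i 0 : ℤ)|) :
    x = y := by
  rcases Nat.eq_zero_or_pos n with hn | hn
  · rw [List.length_eq_zero_iff.mp (hx.trans hn), List.length_eq_zero_iff.mp (hy.trans hn)]
  have hjn : R.getD (i + 1) 0 ≥ R.getD i 0 + 2 ∨ R.getD i 0 ≥ R.getD (i + 1) 0 + 2 := by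
    rcases abs_cases ((R.getD (i + 1) 0 : ℤ) - (R.getD i 0 : ℤ)) with ⟨he, _⟩ | ⟨he, _⟩ <;>
      rw [he] at hjump <;> omega
  obtain ⟨jx, hjx, hRxe⟩ := hRx
  obtain ⟨jy, hjy, hRye⟩ := hRy
  obtain ⟨ax, mx, bx⟩ := reconstruct ℓ x R jx hjx hRxe i hi hjn
  obtain ⟨ay, my, by'⟩ := reconstruct ℓ y R jy hjy hRye i hi hjn
  have hRlen : R.length = n + ℓ - 2 := by
    rw [hRxe, List.length_eraseIdx, if_pos hjx, readVec_length, hx]; omega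
  rw [hx] at bx
  rw [hy] at by'
  have hT : ∀ k, k < n + ℓ - 1 → (readVec ℓ x).getD k 0 = (readVec ℓ y).getD k 0 := by
    intro k hk
    rcases lt_or_ge k (i + 1) with h1 | h1
    · rw [ax k (by omega), ay k (by omega)]
    rcases eq_or_lt_of_le h1 with h2 | h2
    · subst h2; omega
    · rw [bx k (by omega) hk, by' k (by omega) hk]
  have hf : ∀ k, k < x.length + ℓ - 1 → ffun ℓ x k = ffun ℓ y k := by
    intro k hk
    rw [hx] at hk
    rw [← readVec_getD ℓ x (by omega), ← readVec_getD ℓ y (by omega)]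
    exact hT k hk
  exact inj ℓ hℓ x y (hy.trans hx.symm) (by omega) hf
end

section
/- Let ℓ ≥ 1 and n ≥ ℓ. Every single-deletion ℓ-read code is also a single-ℓ-sticky-deletion-correcting code: if C ⊆ {0,1}^n satisfies D(Tr(x)) ∩ D(Tr(y)) = ∅ for all distinct x, y ∈ C, then S_ℓ(x) ∩ S_ℓ(y) = ∅ for all distinct x, y ∈ C. -/
/-- The single `r`-sticky-deletion ball: all vectors obtained from `u` by deleting one symbol
lying in a run of length at least `r`. -/
def stickyBall (r : ℕ) (u : List Bool) : Set (List Bool) :=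
  { v | ∃ i, i + r ≤ u.length ∧ (∀ j < r, u.getD (i + j) false = u.getD i false) ∧
      v = u.eraseIdx i }

/-!
Padding `x` with `ℓ - 1` zeros on each side, `Tr(x)` is the list of weights of the length-`ℓ`
windows of the padded word. Deleting a symbol of a run of length `ℓ` shortens that run by one:
a window overlapping the shortened run sees the same block of equal symbols as before, only
shifted, and the one window starting at the run disappears. So a sticky deletion of `x` induces
an ordinary deletion of `Tr(x)`, and a common sticky deletion of `x ≠ y` would give a common
deletion of `Tr(x)` and `Tr(y)`.
-/

namespace List

variable {α : Type*}

def windows (ℓ : ℕ) (y : List α) : List (List α) :=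
  (range (y.length + 1 - ℓ)).map fun k => (y.drop k).take ℓ

theorem windows_cons {ℓ : ℕ} (z : α) (w : List α) (h : ℓ ≤ w.length + 1) :
    windows ℓ (z :: w) = (z :: w).take ℓ :: windows ℓ w := by
  have hlen : (z :: w).length + 1 - ℓ = w.length + 1 - ℓ + 1 := by simp; omega
  simp only [windows, hlen, range_succ_eq_map, map_cons, map_map, drop_zero]
  rfl

theorem take_succ_cons_append_replicate (z : α) (a : List α) (m : ℕ) (c : α) (b : List α) :
    (z :: (a ++ replicate m c ++ b)).take (m + 1) =
      (z :: (a ++ replicate (m + 1) c ++ b)).take (m + 1) := by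
  simp only [← cons_append, append_assoc, take_append (l₁ := z :: a), length_cons]
  rw [take_append_of_le_length (by simp), take_append_of_le_length (by simp; omega),
    take_replicate, take_replicate]
  congr 2
  omega

theorem windows_replicate_eq_eraseIdx (m : ℕ) (c : α) (b : List α) :
    ∀ a : List α, windows (m + 1) (a ++ replicate m c ++ b) =
      (windows (m + 1) (a ++ replicate (m + 1) c ++ b)).eraseIdx a.length
  | [] => by
    rw [nil_append, nil_append, replicate_succ, cons_append, windows_cons _ _ (by simp),
      length_nil, eraseIdx_zero, tail_cons]
  | z :: a => by
    simp only [cons_append, length_cons]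
    rw [windows_cons _ _ (by simp; omega), windows_cons _ _ (by simp; omega), eraseIdx_cons_succ,
      windows_replicate_eq_eraseIdx m c b a, take_succ_cons_append_replicate]

theorem eraseIdx_append_replicate_succ (a : List α) (m : ℕ) (c : α) (b : List α) :
    (a ++ replicate (m + 1) c ++ b).eraseIdx a.length = a ++ replicate m c ++ b := by
  rw [append_assoc, eraseIdx_append_of_length_le le_rfl, Nat.sub_self, replicate_succ, cons_append,
    eraseIdx_zero, tail_cons, append_assoc]

end List

open List

theorem readVec_succ_eq_map_windows (m : ℕ) (x : List Bool) :
    readVec (m + 1) x =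
      (windows (m + 1) (replicate m false ++ x ++ replicate m false)).map (count true) := by
  simp only [readVec, windows, map_map, length_append, length_replicate]
  congr 2
  omega

theorem exists_replicate_of_mem_stickyBall {m : ℕ} {u v : List Bool}
    (hv : v ∈ stickyBall (m + 1) u) :
    ∃ a c b, u = a ++ replicate (m + 1) c ++ b ∧ v = a ++ replicate m c ++ b := by
  obtain ⟨i, hi, hrun, rfl⟩ := hv
  set c := u.getD i false
  have hwindow : (u.drop i).take (m + 1) = replicate (m + 1) c := by
    refine eq_replicate_iff.2 ⟨by simp; omega, fun d hd => ?_⟩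
    obtain ⟨j, hj, rfl⟩ := mem_iff_getElem.1 hd
    have hj' : j < m + 1 := by simp at hj; omega
    rw [getElem_take, getElem_drop, ← getD_eq_getElem u false, hrun j hj']
  have hu : u = u.take i ++ replicate (m + 1) c ++ u.drop (i + (m + 1)) := by
    rw [← hwindow, append_assoc, ← drop_drop, take_append_drop, take_append_drop]
  have hi' : (u.take i).length = i := length_take_of_le (by omega)
  refine ⟨u.take i, c, u.drop (i + (m + 1)), hu, ?_⟩
  calc u.eraseIdx i
      = (u.take i ++ replicate (m + 1) c ++ u.drop (i + (m + 1))).eraseIdx (u.take i).length := by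
        rw [← hu, hi']
    _ = _ := eraseIdx_append_replicate_succ _ _ _ _

theorem readVec_mem_delBall_of_mem_stickyBall {m : ℕ} {u v : List Bool}
    (hv : v ∈ stickyBall (m + 1) u) : readVec (m + 1) v ∈ delBall (readVec (m + 1) u) := by
  obtain ⟨a, c, b, rfl, rfl⟩ := exists_replicate_of_mem_stickyBall hv
  have hpad : ∀ k, replicate m false ++ (a ++ replicate k c ++ b) ++ replicate m false =
      (replicate m false ++ a) ++ replicate k c ++ (b ++ replicate m false) := by
    simp only [append_assoc, implies_true]
  refine ⟨(replicate m false ++ a).length, ?_, ?_⟩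
  · simp only [readVec, length_map, length_range, length_append, length_replicate]
    omega
  · rw [readVec_succ_eq_map_windows, readVec_succ_eq_map_windows, hpad, hpad,
      windows_replicate_eq_eraseIdx, eraseIdx_map]

theorem readCode_is_stickyCode_general (ℓ : ℕ) (hℓ : 1 ≤ ℓ) (C : Set (List Bool))
    (hcode : ∀ x ∈ C, ∀ y ∈ C, x ≠ y → delBall (readVec ℓ x) ∩ delBall (readVec ℓ y) = ∅) :
    ∀ x ∈ C, ∀ y ∈ C, x ≠ y → stickyBall ℓ x ∩ stickyBall ℓ y = ∅ := by
  obtain ⟨m, rfl⟩ := Nat.exists_eq_add_of_le' hℓ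
  intro x hx y hy hne
  refine Set.eq_empty_of_forall_notMem fun v ⟨hvx, hvy⟩ => ?_
  exact Set.eq_empty_iff_forall_notMem.1 (hcode x hx y hy hne) _
    ⟨readVec_mem_delBall_of_mem_stickyBall hvx, readVec_mem_delBall_of_mem_stickyBall hvy⟩

/-- Let `ℓ ≥ 1` and `n ≥ ℓ`. Every single-deletion `ℓ`-read code is also a
single-`ℓ`-sticky-deletion-correcting code: if `C ⊆ {0,1}ⁿ` satisfies
`D(Tr(x)) ∩ D(Tr(y)) = ∅` for all distinct `x, y ∈ C`, then `S_ℓ(x) ∩ S_ℓ(y) = ∅` for all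
distinct `x, y ∈ C`. -/
theorem readCode_is_stickyCode (ℓ n : ℕ) (hℓ : 1 ≤ ℓ) (hn : ℓ ≤ n) (C : Set (List Bool))
    (hlen : ∀ x ∈ C, x.length = n)
    (hcode : ∀ x ∈ C, ∀ y ∈ C, x ≠ y → delBall (readVec ℓ x) ∩ delBall (readVec ℓ y) = ∅) :
    ∀ x ∈ C, ∀ y ∈ C, x ≠ y → stickyBall ℓ x ∩ stickyBall ℓ y = ∅ :=
  readCode_is_stickyCode_general ℓ hℓ C hcode
end

section
/- For integers n ≥ 1 and 1 ≤ a ≤ n, the average over all x ∈ {0,1}^n of the number of runs of length at least a equals 2^{−a}(n − a + 2); equivalently, ∑_{x ∈ {0,1}^n} ρ_{≥a}(x) = 2^{n−a}(n − a + 2). -/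
/-!
Double counting over the start position `i` of a run. For `i + a ≤ n`, a run of length `≥ a`
starts at `i` exactly when `x` is constant on `[i, i + a)` and, if `i > 0`, `x (i - 1)` takes the
other value. This pins `x` on `a + 1` positions (`a` if `i = 0`) up to one global flip, so
`2 ^ (n - a)` vectors qualify (`2 ^ (n - a + 1)` if `i = 0`), and summing over `0 ≤ i ≤ n - a`
gives `2 ^ (n - a) * (n - a + 2)`.
-/

/-- `runsGe a u` is the number of maximal runs of `u` of length at least `a`, counted via
their starting positions: positions `i` at which a run starts (`i = 0` or `u_{i-1} ≠ u_i`)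
and the following `a` symbols of `u` are equal. -/
def runsGe (a : ℕ) (u : List Bool) : ℕ :=
  ((Finset.range u.length).filter fun i =>
    (i = 0 ∨ u.getD (i - 1) false ≠ u.getD i false) ∧ i + a ≤ u.length ∧
      ∀ j < a, u.getD (i + j) false = u.getD i false).card

open Finset

lemma card_filter_forall_mem_eq {ι β : Type*} [Fintype ι] [DecidableEq ι] [Fintype β]
    [DecidableEq β] (s : Finset ι) (f : ι → β) :
    #{x : ι → β | ∀ k ∈ s, x k = f k} = Fintype.card β ^ (Fintype.card ι - #s) := by
  have hpi : ({x : ι → β | ∀ k ∈ s, x k = f k} : Finset (ι → β)) =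
      Fintype.piFinset fun k => if k ∈ s then {f k} else univ := by
    ext x
    simp only [mem_filter, mem_univ, true_and, Fintype.mem_piFinset]
    refine forall_congr' fun k => ?_
    split_ifs <;> simp [*]
  rw [hpi, Fintype.card_piFinset]
  simp [apply_ite card, prod_ite, filter_not, card_sdiff]

lemma card_filter_exists_forall_mem_eq_xor {ι : Type*} [Fintype ι] [DecidableEq ι]
    {s : Finset ι} (hs : s.Nonempty) (p : ι → Bool) :
    #{x : ι → Bool | ∃ b, ∀ k ∈ s, x k = (b ^^ p k)} = 2 ^ (Fintype.card ι - #s + 1) := by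
  obtain ⟨k₀, hk₀⟩ := hs
  simp only [Bool.exists_bool]
  rw [filter_or, card_union_of_disjoint, card_filter_forall_mem_eq, card_filter_forall_mem_eq,
    Fintype.card_bool, pow_succ, mul_two]
  rw [disjoint_filter]
  intro x _ hfalse htrue
  simpa using (hfalse k₀ hk₀).symm.trans (htrue k₀ hk₀)

/-- By truncated subtraction the window `Ico (i - 1) (i + a)` is `[0, a)` when `i = 0`, so the
same pattern describes a run start at `0` and at `i > 0`. -/
lemma startsRunGe_iff {e : ℕ → Bool} {a i : ℕ} (ha : 0 < a) :
    ((i = 0 ∨ e (i - 1) ≠ e i) ∧ ∀ j < a, e (i + j) = e i) ↔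
      ∃ b, ∀ k ∈ Ico (i - 1) (i + a), e k = (b ^^ decide (k < i)) := by
  constructor
  · rintro ⟨hstart, hrun⟩
    refine ⟨e i, fun k hk => ?_⟩
    rw [mem_Ico] at hk
    by_cases hki : k < i
    · obtain rfl : k = i - 1 := by omega
      have hne : e (i - 1) ≠ e i := hstart.resolve_left (by omega)
      simpa [hki] using Bool.eq_not.mpr hne
    · simpa [hki, show i + (k - i) = k by omega] using hrun (k - i) (by omega)
  · rintro ⟨b, hb⟩
    have hi : e i = b := by simpa using hb i (by simp; omega)
    refine ⟨?_, fun j hj => ?_⟩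
    · rcases Nat.eq_zero_or_pos i with hi0 | hi0
      · exact .inl hi0
      · right
        simp [hb (i - 1) (by simp; omega), hi0, hi]
    · simpa [hi] using hb (i + j) (by simp; omega)

lemma getD_ofFn_of_lt {α : Type*} {n : ℕ} (x : Fin n → α) (d : α) {k : ℕ} (hk : k < n) :
    (List.ofFn x).getD k d = x ⟨k, hk⟩ := by
  rw [List.getD_eq_getElem _ _ (by simpa using hk), List.getElem_ofFn]

lemma card_filter_startsRunGe {n a i : ℕ} (ha : 0 < a) (hi : i + a ≤ n) :
    #{x : Fin n → Bool | ∃ b, ∀ k ∈ Ico (i - 1) (i + a),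
        (List.ofFn x).getD k false = (b ^^ decide (k < i))} = 2 ^ (n - (i + a - (i - 1)) + 1) := by
  have hlt : ∀ k ∈ Ico (i - 1) (i + a), k < n := fun k hk => by rw [mem_Ico] at hk; omega
  have hne : ((Ico (i - 1) (i + a)).attachFin hlt).Nonempty :=
    ⟨⟨i, by omega⟩, by simp [mem_attachFin]; omega⟩
  have hcount := card_filter_exists_forall_mem_eq_xor hne fun k => decide (k.val < i)
  rw [Fintype.card_fin, card_attachFin, Nat.card_Ico] at hcount
  rw [← hcount]
  congr 1
  ext x
  simp only [mem_filter, mem_univ, true_and, mem_attachFin]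
  refine exists_congr fun b => ⟨fun h k hk => ?_, fun h k hk => ?_⟩
  · simpa [getD_ofFn_of_lt x false (hlt _ hk)] using h k hk
  · rw [getD_ofFn_of_lt x false (hlt k hk)]
    exact h ⟨k, hlt k hk⟩ hk

lemma runsGe_ofFn {n a : ℕ} (ha : 0 < a) (x : Fin n → Bool) :
    runsGe a (List.ofFn x) = #{i ∈ range (n + 1 - a) | ∃ b, ∀ k ∈ Ico (i - 1) (i + a),
        (List.ofFn x).getD k false = (b ^^ decide (k < i))} := by
  rw [runsGe, List.length_ofFn]
  congr 1
  ext i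
  simp only [mem_filter, mem_range, ← startsRunGe_iff ha]
  constructor
  · rintro ⟨-, hstart, hfit, hrun⟩
    exact ⟨by omega, hstart, hrun⟩
  · rintro ⟨hfit, hstart, hrun⟩
    exact ⟨by omega, hstart, by omega, hrun⟩

theorem sum_runsGe_eq_general (n a : ℕ) (ha : 1 ≤ a) (han : a ≤ n) :
    ∑ x : Fin n → Bool, runsGe a (List.ofFn x) = 2 ^ (n - a) * (n - a + 2) := by
  simp_rw [runsGe_ofFn ha]
  refine (sum_card_bipartiteAbove_eq_sum_card_bipartiteBelow _).trans ?_
  unfold bipartiteBelow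
  rw [sum_congr rfl fun i hi => card_filter_startsRunGe ha (by rw [mem_range] at hi; omega),
    show n + 1 - a = n - a + 1 by omega, sum_range_succ']
  have hinner : ∀ i ∈ range (n - a), 2 ^ (n - (i + 1 + a - (i + 1 - 1)) + 1) = 2 ^ (n - a) :=
    fun i hi => by rw [mem_range] at hi; congr 1; omega
  rw [sum_congr rfl hinner, sum_const, card_range, smul_eq_mul,
    show n - (0 + a - (0 - 1)) + 1 = n - a + 1 by omega, pow_succ]
  ring

/-- For `n ≥ 1` and `1 ≤ a ≤ n`, the sum over all `x ∈ {0,1}ⁿ` of the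
number of runs of length at least `a` equals `2^{n−a}·(n − a + 2)`; equivalently, the
average number of such runs is `2^{−a}(n − a + 2)`. -/
theorem sum_runsGe_eq (n a : ℕ) (hn : 1 ≤ n) (ha : 1 ≤ a) (han : a ≤ n) :
    ∑ x : Fin n → Bool, runsGe a (List.ofFn x) = 2 ^ (n - a) * (n - a + 2) :=
  sum_runsGe_eq_general n a ha han
end

section
/- Generalized sphere-packing bound: let X and Y be finite sets, let B : X → P(Y) assign to each input its set of possible channel outputs, and let w : Y → ℝ satisfy w(y) ≥ 0 for all y ∈ Y and ∑_{y ∈ B(x)} w(y) ≥ 1 for all x ∈ X. Then any code C ⊆ X whose output balls are pairwise disjoint (B(c) ∩ B(c') = ∅ for all distinct c, c' ∈ C) satisfies |C| ≤ ∑_{y ∈ Y} w(y). -/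
/-- **generalized sphere-packing bound.** Let `X` and `Y` be finite sets,
let `B : X → P(Y)` assign to each input its set of possible channel outputs, and let
`w : Y → ℝ` satisfy `w(y) ≥ 0` for all `y` and `∑_{y ∈ B(x)} w(y) ≥ 1` for all `x`. Then
any code `C ⊆ X` whose output balls are pairwise disjoint satisfies
`|C| ≤ ∑_{y ∈ Y} w(y)`. -/
theorem generalized_sphere_packing {X Y : Type*} [Fintype X] [Fintype Y]
    (B : X → Finset Y) (w : Y → ℝ) (hw : ∀ y, 0 ≤ w y)
    (hwB : ∀ x, 1 ≤ ∑ y ∈ B x, w y)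
    (C : Finset X) (hC : ∀ c ∈ C, ∀ c' ∈ C, c ≠ c' → Disjoint (B c) (B c')) :
    (C.card : ℝ) ≤ ∑ y, w y := by
  classical
  calc (C.card : ℝ) = ∑ c ∈ C, (1 : ℝ) := by simp
    _ ≤ ∑ c ∈ C, ∑ y ∈ B c, w y := Finset.sum_le_sum fun c _ => hwB c
    _ = ∑ y ∈ C.biUnion B, w y := (Finset.sum_biUnion hC).symm
    _ ≤ ∑ y, w y := Finset.sum_le_sum_of_subset_of_nonneg (Finset.subset_univ _)
        (fun y _ _ => hw y)
end

section
/- For every ℓ ≥ 1, n ≥ ℓ, and every a ∈ {0,1,...,n}, the code C(n,ℓ,a) = { x ∈ {0,1}^n : ∑_{i=1}^{n} i·(Tr(x)_i mod 2) ≡ a (mod n+1) } is a single-deletion ℓ-read code: for all distinct x, y ∈ C(n,ℓ,a), D(Tr(x)) ∩ D(Tr(y)) = ∅. -/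
/-- The code `C(n, ℓ, a)`: all `x ∈ {0,1}ⁿ` such that
`∑_{i=1}^{n} i·(Tr(x)_i mod 2) ≡ a (mod n+1)` (a Varshamov–Tenengolts-type constraint on the
first `n` entries of the `ℓ`-read vector taken modulo 2). -/
def codeC (n ℓ a : ℕ) : Set (List Bool) :=
  { x | x.length = n ∧
    (∑ i ∈ Finset.range n, (i + 1) * ((readVec ℓ x).getD i 0 % 2)) % (n + 1) = a }

open Finset

section Telescoping

variable {g : ℕ → ℤ} {I T : ℕ}

theorem sum_Ico_mul_sub_succ (hIT : I ≤ T) :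
    ∑ k ∈ Ico I T, ((k : ℤ) + 1) * (g k - g (k + 1))
      = I * g I + ∑ k ∈ Ico I T, g k - T * g T := by
  induction T, hIT using Nat.le_induction with
  | base => simp
  | succ T hIT ih =>
    rw [sum_Ico_succ_top hIT, ih, sum_Ico_succ_top hIT]
    push_cast
    ring

theorem abs_sum_Ico_mul_sub_succ_le (hg : ∀ k, 0 ≤ g k ∧ g k ≤ 1) (hIT : I ≤ T) :
    |∑ k ∈ Ico I T, ((k : ℤ) + 1) * (g k - g (k + 1))| ≤ T := by
  have hsum : ∑ k ∈ Ico I T, g k ≤ ((T - I : ℕ) : ℤ) := by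
    simpa using sum_le_card_nsmul (Ico I T) g 1 fun k _ => (hg k).2
  have hsum' : 0 ≤ ∑ k ∈ Ico I T, g k := sum_nonneg fun k _ => (hg k).1
  have hI : (0 : ℤ) ≤ I * g I ∧ I * g I ≤ I := ⟨by nlinarith [hg I], by nlinarith [hg I]⟩
  have hT : (0 : ℤ) ≤ T * g T ∧ T * g T ≤ T := ⟨by nlinarith [hg T], by nlinarith [hg T]⟩
  rw [sum_Ico_mul_sub_succ hIT, abs_le]
  push_cast [Nat.cast_sub hIT] at hsum
  constructor <;> linarith

theorem eq_zero_of_sum_Ico_mul_sub_succ_eq_zero (hg : ∀ k, 0 ≤ g k ∧ g k ≤ 1) (hIT : I ≤ T)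
    (hzero : ∑ k ∈ Ico I T, ((k : ℤ) + 1) * (g k - g (k + 1)) = 0) (hgT : g T = 0) :
    ∀ k ∈ Icc I T, g k = 0 := by
  rw [sum_Ico_mul_sub_succ hIT, hgT, mul_zero, sub_zero] at hzero
  have hI : (0 : ℤ) ≤ I * g I := mul_nonneg (Nat.cast_nonneg I) (hg I).1
  have hsum : ∑ k ∈ Ico I T, g k = 0 := le_antisymm (by linarith) (sum_nonneg fun k _ => (hg k).1)
  intro k hk
  rcases (mem_Icc.1 hk).2.lt_or_eq with hkT | rfl
  · exact (sum_eq_zero_iff_of_nonneg fun k _ => (hg k).1).1 hsum k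
      (mem_Ico.2 ⟨(mem_Icc.1 hk).1, hkT⟩)
  · exact hgT

theorem eq_of_sum_Ico_mul_sub_succ_eq_zero (hg : ∀ k, 0 ≤ g k ∧ g k ≤ 1) (hIT : I ≤ T)
    (hzero : ∑ k ∈ Ico I T, ((k : ℤ) + 1) * (g k - g (k + 1)) = 0) :
    ∀ k ∈ Icc I T, g k = g T := by
  rcases (hg T) with ⟨h0, h1⟩
  obtain hgT | hgT : g T = 0 ∨ g T = 1 := by omega
  · intro k hk
    rw [hgT, eq_zero_of_sum_Ico_mul_sub_succ_eq_zero hg hIT hzero hgT k hk]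
  · have hflip : ∑ k ∈ Ico I T, ((k : ℤ) + 1) * ((1 - g k) - (1 - g (k + 1))) = 0 := by
      rw [← neg_eq_zero, ← hzero, ← sum_neg_distrib]
      exact sum_congr rfl fun k _ => by ring
    intro k hk
    have := eq_zero_of_sum_Ico_mul_sub_succ_eq_zero (g := fun k => 1 - g k)
      (fun k => by constructor <;> linarith [hg k]) hIT hflip (by simp [hgT]) k hk
    linarith

end Telescoping

theorem eq_of_erase_eq_of_weighted_sum_modEq {b c : ℕ → ℕ} (hb : ∀ k, b k ≤ 1) (hc : ∀ k, c k ≤ 1)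
    {I J n : ℕ} (hIJ : I ≤ J)
    (herase : ∀ k, (if k < I then b k else b (k + 1)) = if k < J then c k else c (k + 1))
    (hvt : ∑ k ∈ range n, (k + 1) * b k ≡ ∑ k ∈ range n, (k + 1) * c k [MOD n + 1]) :
    ∀ k < n, b k = c k := by
  have hout : ∀ k, k < I ∨ J < k → b k = c k := by
    rintro k (hk | hk)
    · simpa [hk, hk.trans_le hIJ] using herase k
    · obtain ⟨k, rfl⟩ := Nat.exists_eq_add_of_lt hk
      simpa [show ¬ J + k < I by omega, show ¬ J + k < J by omega] using herase (J + k)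
  -- `g` interpolates: on `[I, T)` it reads as `b` at `k` and as `c` at `k + 1`.
  set g : ℕ → ℤ := fun k => if k ≤ J then b k else c (k - 1) with hg_def
  set T := min (J + 1) n
  have hg : ∀ k, 0 ≤ g k ∧ g k ≤ 1 := fun k => by
    simp only [hg_def]; split_ifs <;> constructor <;> simp [hb, hc]
  have hbg : ∀ k, I ≤ k → k < T → (b k : ℤ) = g k ∧ (c k : ℤ) = g (k + 1) := by
    intro k hIk hkT
    refine ⟨by simp [hg_def, show k ≤ J by omega], ?_⟩
    rcases (show k < J ∨ k = J by omega) with hkJ | rfl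
    · simpa [hg_def, hkJ, show ¬ k < I by omega, show k + 1 ≤ J by omega] using (herase k).symm
    · simp [hg_def]
  rcases le_or_gt n I with hnI | hIn
  · exact fun k hk => hout k (.inl (hk.trans_le hnI))
  have hIT : I ≤ T := by omega
  have hsum : ((∑ k ∈ range n, (k + 1) * b k : ℕ) : ℤ) - ∑ k ∈ range n, (k + 1) * c k
      = ∑ k ∈ Ico I T, ((k : ℤ) + 1) * (g k - g (k + 1)) := by
    push_cast
    simp_rw [← sum_sub_distrib, ← mul_sub]
    calc ∑ k ∈ range n, ((k : ℤ) + 1) * (b k - c k)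
        = ∑ k ∈ Ico I T, ((k : ℤ) + 1) * (b k - c k) := by
          refine (sum_subset (fun k hk => by simp at hk ⊢; omega) fun k hk hkIT => ?_).symm
          simp only [mem_range, mem_Ico] at hk hkIT
          rw [hout k (by omega), sub_self, mul_zero]
      _ = ∑ k ∈ Ico I T, ((k : ℤ) + 1) * (g k - g (k + 1)) :=
          sum_congr rfl fun k hk => by
            obtain ⟨hbk, hck⟩ := hbg k (mem_Ico.1 hk).1 (mem_Ico.1 hk).2
            rw [hbk, hck]
  have hzero : ∑ k ∈ Ico I T, ((k : ℤ) + 1) * (g k - g (k + 1)) = 0 := by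
    refine Int.eq_zero_of_abs_lt_dvd (m := n + 1) ?_
      ((abs_sum_Ico_mul_sub_succ_le hg hIT).trans_lt ?_)
    · rw [← hsum]; exact_mod_cast hvt.symm.dvd
    · omega
  have hconst := eq_of_sum_Ico_mul_sub_succ_eq_zero hg hIT hzero
  intro k hk
  by_cases hkIJ : k < I ∨ J < k
  · exact hout k hkIJ
  obtain ⟨hbk, hck⟩ := hbg k (by omega) (by omega)
  have := (hconst k (by simp; omega)).trans (hconst (k + 1) (by simp; omega)).symm
  exact_mod_cast hbk.trans (this.trans hck.symm)

theorem count_take_padded (ℓ k : ℕ) (x : List Bool) :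
    ((List.replicate (ℓ - 1) false ++ x ++ List.replicate (ℓ - 1) false).take k).count true
      = (x.take (k - (ℓ - 1))).count true := by
  rw [List.append_assoc, List.take_append, List.take_append]
  simp [List.take_replicate, List.count_replicate]

-- Also valid past the end of `readVec`, where `getD` returns `0`.
theorem readVec_getD_add_count_take {ℓ : ℕ} (hℓ : 1 ≤ ℓ) (x : List Bool) (i : ℕ) :
    (readVec ℓ x).getD i 0 + (x.take (i + 1 - ℓ)).count true = (x.take (i + 1)).count true := by
  by_cases hi : i < x.length + ℓ - 1
  · set p := List.replicate (ℓ - 1) false ++ x ++ List.replicate (ℓ - 1) false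
    have hget : (readVec ℓ x).getD i 0 = ((p.drop i).take ℓ).count true := by
      simp [readVec, List.getElem?_range hi, p]
    have hcount := congrArg (List.count true) (List.take_add (l := p) (i := i) (j := ℓ))
    rw [List.count_append, count_take_padded, count_take_padded,
      show i + ℓ - (ℓ - 1) = i + 1 by omega, show i - (ℓ - 1) = i + 1 - ℓ by omega] at hcount
    omega
  · rw [List.getD_eq_getElem?_getD, List.getElem?_eq_none (by simp [readVec]; omega),
      List.take_of_length_le (by omega), List.take_of_length_le (by omega)]
    simp

theorem count_take_succ (x : List Bool) {i : ℕ} (hi : i < x.length) :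
    (x.take (i + 1)).count true = (x.take i).count true + x[i].toNat := by
  rw [List.take_add_one, List.getElem?_eq_getElem hi, Option.toList_some, List.count_append]
  cases x[i] <;> simp

theorem eq_of_readVec_getD_mod_two_eq {ℓ : ℕ} (hℓ : 1 ≤ ℓ) {x y : List Bool}
    (hlen : x.length = y.length)
    (h : ∀ i < x.length, (readVec ℓ x).getD i 0 % 2 = (readVec ℓ y).getD i 0 % 2) : x = y := by
  have hcount : ∀ k ≤ x.length, (x.take k).count true % 2 = (y.take k).count true % 2 := by
    intro k
    induction k using Nat.strong_induction_on with
    | _ k ih =>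
      intro hk
      rcases k with _ | i
      · simp
      have := ih (i + 1 - ℓ) (by omega) (by omega)
      have := h i (by omega)
      have := readVec_getD_add_count_take hℓ x i
      have := readVec_getD_add_count_take hℓ y i
      omega
  refine List.ext_getElem hlen fun i hx hy => ?_
  have := hcount i hx.le
  have := hcount (i + 1) hx
  have := count_take_succ x hx
  have := count_take_succ y hy
  have := Bool.toNat_le x[i]
  have := Bool.toNat_le y[i]
  have htoNat : x[i].toNat = y[i].toNat := by omega
  revert htoNat
  cases x[i] <;> cases y[i] <;> simp

theorem List.getD_eraseIdx {α : Type*} (l : List α) (i k : ℕ) (d : α) :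
    (l.eraseIdx i).getD k d = if k < i then l.getD k d else l.getD (k + 1) d := by
  simp only [List.getD_eq_getElem?_getD, List.getElem?_eraseIdx]
  split_ifs <;> rfl

theorem codeC_is_single_deletion_read_code_general (ℓ n a : ℕ) (hℓ : 1 ≤ ℓ) :
    ∀ x ∈ codeC n ℓ a, ∀ y ∈ codeC n ℓ a, x ≠ y →
      delBall (readVec ℓ x) ∩ delBall (readVec ℓ y) = ∅ := by
  intro x hx y hy hne
  refine Set.eq_empty_iff_forall_notMem.2 ?_
  rintro z ⟨⟨i, -, hzx⟩, ⟨j, -, hzy⟩⟩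
  refine hne ?_
  wlog hij : i ≤ j generalizing x y i j
  · exact (this y hy x hx (Ne.symm hne) j hzy i hzx (le_of_not_ge hij)).symm
  have herase (k : ℕ) := congrArg (fun v => v.getD k 0 % 2) (hzx.symm.trans hzy)
  simp only [List.getD_eraseIdx, apply_ite (fun m : ℕ => m % 2)] at herase
  refine eq_of_readVec_getD_mod_two_eq hℓ (hx.1.trans hy.1.symm) fun k hk =>
    eq_of_erase_eq_of_weighted_sum_modEq (fun _ => by omega) (fun _ => by omega) hij herase
      (hx.2.trans hy.2.symm) k (hx.1 ▸ hk)

/-- For every `ℓ ≥ 1`, `n ≥ ℓ`, and `a ∈ {0,1,…,n}`, the code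
`C(n,ℓ,a)` is a single-deletion `ℓ`-read code: for all distinct `x, y ∈ C(n,ℓ,a)`,
`D(Tr(x)) ∩ D(Tr(y)) = ∅`. -/
theorem codeC_is_single_deletion_read_code (ℓ n a : ℕ) (hℓ : 1 ≤ ℓ) (hn : ℓ ≤ n)
    (ha : a ≤ n) :
    ∀ x ∈ codeC n ℓ a, ∀ y ∈ codeC n ℓ a, x ≠ y →
      delBall (readVec ℓ x) ∩ delBall (readVec ℓ y) = ∅ :=
  codeC_is_single_deletion_read_code_general ℓ n a hℓ
end

section
/- For every ℓ ≥ 2 there exist no two distinct vectors x, y ∈ {0,1}^n such that the ℓ-read vectors Tr(x) and Tr(y) are confusable. -/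
/-- The alternating word of length `k` over symbols `α, β`, starting with `α`:
`αβαβ…` . -/
def altWord {σ : Type*} (α β : σ) (k : ℕ) : List σ :=
  (List.range k).map fun i => if i % 2 = 0 then α else β

/-- Two words `u, v` are confusable if `u = a c b` and `v = a c̄ b` where `|c| = |c̄| ≥ 2`
and `{c, c̄} = {αβαβ…, βαβα…}` for some distinct symbols `α ≠ β`. -/
def Confusable {σ : Type*} (u v : List σ) : Prop :=
  ∃ (a b : List σ) (α β : σ) (k : ℕ), α ≠ β ∧ 2 ≤ k ∧
    u = a ++ altWord α β k ++ b ∧ v = a ++ altWord β α k ++ b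

/-!
Write `F_s(i)` for the number of ones among the first `i` letters of the zero-padded word `s`:
the read vector lists the window weights `F_s(i + ℓ) - F_s(i)`, and `F_s` grows by `0` or `1`
per letter. If `Tr(x)` and `Tr(y)` agree before position `p`, induction from the `ℓ - 1` leading
zeros gives `F_x = F_y` below `p + ℓ`. A swap `α β ↦ β α` at positions `p, p + 1` then forces
`F_x - F_y` to be `α - β` at `p + ℓ` and `β - α` at `p + ℓ + 1` (here `p + 1 < p + ℓ`, i.e.
`ℓ ≥ 2`, is needed), a jump of `2|α - β| ≤ 1`; hence `α = β`.
-/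

def prefixWeight (s : List Bool) (i : ℕ) : ℕ :=
  (s.take i).count true

def windowWeight (ℓ : ℕ) (s : List Bool) (i : ℕ) : ℕ :=
  ((s.drop i).take ℓ).count true

def readPad (ℓ : ℕ) (x : List Bool) : List Bool :=
  List.replicate (ℓ - 1) false ++ x ++ List.replicate (ℓ - 1) false

theorem readVec_eq_map_windowWeight (ℓ : ℕ) (x : List Bool) :
    readVec ℓ x = (List.range (x.length + ℓ - 1)).map (windowWeight ℓ (readPad ℓ x)) :=
  rfl

theorem prefixWeight_add_windowWeight (ℓ : ℕ) (s : List Bool) (i : ℕ) :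
    prefixWeight s i + windowWeight ℓ s i = prefixWeight s (i + ℓ) := by
  rw [prefixWeight, prefixWeight, windowWeight, List.take_add, List.count_append]

theorem windowWeight_le (ℓ : ℕ) (s : List Bool) (i : ℕ) : windowWeight ℓ s i ≤ ℓ :=
  List.count_le_length.trans (List.length_take_le _ _)

theorem take_readPad (ℓ : ℕ) (x : List Bool) :
    (readPad ℓ x).take (ℓ - 1) = List.replicate (ℓ - 1) false := by
  rw [readPad, List.append_assoc, List.take_left' List.length_replicate]

theorem prefixWeight_eq_of_windowWeight_eq {ℓ p : ℕ} {s t : List Bool} (hℓ : 0 < ℓ)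
    (hinit : s.take (ℓ - 1) = t.take (ℓ - 1))
    (hwin : ∀ j < p, windowWeight ℓ s j = windowWeight ℓ t j) :
    ∀ i < p + ℓ, prefixWeight s i = prefixWeight t i := by
  intro i
  induction i using Nat.strong_induction_on with
  | _ i ih =>
    intro hi
    by_cases hiℓ : i < ℓ
    · have h : ∀ u : List Bool, u.take i = (u.take (ℓ - 1)).take i := fun u => by
        rw [List.take_take, min_eq_left (by omega)]
      rw [prefixWeight, prefixWeight, h s, h t, hinit]
    · obtain ⟨j, rfl⟩ : ∃ j, i = j + ℓ := ⟨i - ℓ, by omega⟩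
      rw [← prefixWeight_add_windowWeight, ← prefixWeight_add_windowWeight,
        ih j (by omega) (by omega), hwin j (by omega)]

theorem windowWeight_swap_eq {ℓ p a b : ℕ} {s t : List Bool} (hℓ : 2 ≤ ℓ)
    (hinit : s.take (ℓ - 1) = t.take (ℓ - 1))
    (hwin : ∀ j < p, windowWeight ℓ s j = windowWeight ℓ t j)
    (hs₀ : windowWeight ℓ s p = a) (ht₀ : windowWeight ℓ t p = b)
    (hs₁ : windowWeight ℓ s (p + 1) = b) (ht₁ : windowWeight ℓ t (p + 1) = a) :
    a = b := by
  have hpre := prefixWeight_eq_of_windowWeight_eq (by omega) hinit hwin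
  have e₀ := hpre p (by omega)
  have e₁ := hpre (p + 1) (by omega)
  have ws₀ := prefixWeight_add_windowWeight ℓ s p
  have wt₀ := prefixWeight_add_windowWeight ℓ t p
  have ws₁ := prefixWeight_add_windowWeight ℓ s (p + 1)
  have wt₁ := prefixWeight_add_windowWeight ℓ t (p + 1)
  have ss := prefixWeight_add_windowWeight 1 s (p + ℓ)
  have st := prefixWeight_add_windowWeight 1 t (p + ℓ)
  have ls := windowWeight_le 1 s (p + ℓ)
  have lt := windowWeight_le 1 t (p + ℓ)
  rw [show p + 1 + ℓ = p + ℓ + 1 by omega] at ws₁ wt₁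
  omega

theorem getElem?_altWord {σ : Type*} (α β : σ) {k j : ℕ} (h : j < k) :
    (altWord α β k)[j]? = some (if j % 2 = 0 then α else β) := by
  simp [altWord, h]

theorem Confusable.exists_swap {σ : Type*} {u v : List σ} (h : Confusable u v) :
    ∃ (p : ℕ) (α β : σ), α ≠ β ∧ (∀ j < p, u[j]? = v[j]?) ∧
      u[p]? = some α ∧ v[p]? = some β ∧ u[p + 1]? = some β ∧ v[p + 1]? = some α := by
  obtain ⟨a, b, α, β, k, hαβ, hk, rfl, rfl⟩ := h
  have hmid : ∀ (γ δ : σ) (j : ℕ), j < k →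
      (a ++ altWord γ δ k ++ b)[a.length + j]? = some (if j % 2 = 0 then γ else δ) := by
    intro γ δ j hj
    rw [List.append_assoc, List.getElem?_append_right (by omega), Nat.add_sub_cancel_left,
      List.getElem?_append_left (by simpa [altWord] using hj), getElem?_altWord _ _ hj]
  refine ⟨a.length, α, β, hαβ, fun j hj => ?_, by simpa using hmid α β 0 (by omega),
    by simpa using hmid β α 0 (by omega), by simpa using hmid α β 1 hk,
    by simpa using hmid β α 1 hk⟩
  simp only [List.append_assoc, List.getElem?_append_left hj]

/-- For every `ℓ ≥ 2` there exist no two distinct vectors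
`x, y ∈ {0,1}ⁿ` such that the `ℓ`-read vectors `Tr(x)` and `Tr(y)` are confusable. -/
theorem readVec_not_confusable (ℓ n : ℕ) (hℓ : 2 ≤ ℓ) :
    ¬ ∃ x y : List Bool, x.length = n ∧ y.length = n ∧ x ≠ y ∧
      Confusable (readVec ℓ x) (readVec ℓ y) := by
  rintro ⟨x, y, hx, hy, -, hc⟩
  obtain ⟨p, α, β, hαβ, hpre, hx₀, hy₀, hx₁, hy₁⟩ := hc.exists_swap
  have hp : p + 1 < n + ℓ - 1 := by
    simpa [readVec_eq_map_windowWeight, hx] using (List.getElem?_eq_some_iff.mp hx₁).1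
  simp only [readVec_eq_map_windowWeight, hx, hy, List.getElem?_map, List.getElem?_range,
    hp, (by omega : p < n + ℓ - 1), Option.map_some, Option.some.injEq] at hx₀ hy₀ hx₁ hy₁
  refine hαβ (windowWeight_swap_eq hℓ ((take_readPad ℓ x).trans (take_readPad ℓ y).symm)
    (fun j hj => ?_) hx₀ hy₀ hx₁ hy₁)
  simpa [readVec_eq_map_windowWeight, hx, hy, show j < n + ℓ - 1 by omega] using hpre j hj
end

section
/- Let ℓ ≥ 2, let x ∈ {0,1}^n, and let R' and R'' be two distinct vectors in D(Tr(x)). Let i and j be, respectively, the first and last indices at which R' and R'' disagree, and define the two candidate vectors R̂ = (R'_1,...,R'_{i−1}, R''_i, R'_i,...,R'_{n+ℓ−2}) (insert R''_i before position i of R') and R̃ = (R'_1,...,R'_j, R''_j, R'_{j+1},...,R'_{n+ℓ−2}) (insert R''_j after position j of R'). Then exactly one of R̂, R̃ is the ℓ-read vector of some binary vector of length n, and that candidate equals Tr(x). -/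
/-!
Write `S_x(t)` for the number of ones among the first `t` coordinates of `x`, so that
`Tr(x)_k = S_x(k+1) - S_x(k+1-ℓ)` for 0-based `k`. Deleting entries `p < q` of `T = Tr(x)` gives
two lists that differ exactly at the positions `k ∈ [p, q)` with `T_k ≠ T_{k+1}`. So `T` is
constant between `p` and the first difference `i`, deleting at `p` is the same as deleting at `i`,
and the candidate inserting at `i` is `T` itself. The other candidate agrees with `T` beyond
`j + 1` but carries the distinct values `T_j ≠ T_{j+1}` in swapped order. The case `q < p` is
the mirror image.

Such a swap never occurs in a read vector. If `Tr(z)` agrees with `Tr(x)` before position `a`,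
then `S_z = S_x` up to `a`, and since `ℓ ≥ 2` this covers the lower ends `a+1-ℓ`, `a+2-ℓ` of the
windows at `a` and `a+1`. A swap at `a` then forces the increments `e` of `S_x` at `a+1-ℓ` and
`f`, `g` of `S_x`, `S_z` at `a+1` to satisfy `f + g = 2e` with `f ≠ e`, impossible in `{0, 1}`.
Agreement after the swap reduces to this by reversal, as `Tr` commutes with reversing `x`.
-/

namespace List

variable {α : Type*} (d : α) {l : List α} {m n i j : ℕ}

theorem getD_eraseIdx_s19 (k : ℕ) :
    (l.eraseIdx m).getD k d = if k < m then l.getD k d else l.getD (k + 1) d := by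
  simp only [getD_eq_getElem?_getD, getElem?_eraseIdx]
  split <;> rfl

theorem getD_insertIdx (hn : n ≤ l.length) (a : α) (k : ℕ) :
    (l.insertIdx n a).getD k d =
      if k < n then l.getD k d else if k = n then a else l.getD (k - 1) d := by
  simp only [getD_eq_getElem?_getD, getElem?_insertIdx]
  split_ifs <;> simp_all

theorem getD_eraseIdx_ne_getD_eraseIdx_iff (hmn : m < n) (k : ℕ) :
    (l.eraseIdx m).getD k d ≠ (l.eraseIdx n).getD k d ↔
      m ≤ k ∧ k < n ∧ l.getD (k + 1) d ≠ l.getD k d := by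
  simp only [getD_eraseIdx_s19]
  split_ifs <;> grind

theorem eraseIdx_eq_eraseIdx_of_getD_eq (hmn : m ≤ n) (hn : n < l.length)
    (hrun : ∀ k, m ≤ k → k < n → l.getD (k + 1) d = l.getD k d) :
    l.eraseIdx m = l.eraseIdx n := by
  ext k : 1
  simp only [getElem?_eraseIdx]
  split_ifs with hkm hkn hkn
  · rfl
  · omega
  · rw [getElem?_eq_getElem (by omega), getElem?_eq_getElem (by omega),
      ← getD_eq_getElem _ d, ← getD_eq_getElem _ d, hrun k (by omega) hkn]
  · rfl

theorem insertIdx_eraseIdx_getD (hn : n < l.length) :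
    (l.eraseIdx n).insertIdx n (l.getD n d) = l := by
  rw [getD_eq_getElem _ _ hn, insertIdx_eraseIdx_getElem hn]


theorem insertIdx_eraseIdx_eq_of_first_ne (hmn : m < n) (hn : n < l.length)
    (hi : (l.eraseIdx m).getD i d ≠ (l.eraseIdx n).getD i d)
    (hbefore : ∀ k < i, (l.eraseIdx m).getD k d = (l.eraseIdx n).getD k d) :
    (l.eraseIdx m).insertIdx i ((l.eraseIdx n).getD i d) = l := by
  obtain ⟨hmi, hin, -⟩ := (getD_eraseIdx_ne_getD_eraseIdx_iff d hmn i).1 hi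
  have hrun : ∀ k, m ≤ k → k < i → l.getD (k + 1) d = l.getD k d := fun k hmk hki =>
    not_not.1 fun hne =>
      (getD_eraseIdx_ne_getD_eraseIdx_iff d hmn k).2 ⟨hmk, by omega, hne⟩ (hbefore k hki)
  rw [eraseIdx_eq_eraseIdx_of_getD_eq d hmi (by omega) hrun, getD_eraseIdx_s19, if_pos hin,
    insertIdx_eraseIdx_getD d (by omega)]

theorem insertIdx_succ_eraseIdx_eq_of_last_ne (hnm : n < m) (hm : m < l.length)
    (hj : (l.eraseIdx m).getD j d ≠ (l.eraseIdx n).getD j d)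
    (hafter : ∀ k, j < k → (l.eraseIdx m).getD k d = (l.eraseIdx n).getD k d) :
    (l.eraseIdx m).insertIdx (j + 1) ((l.eraseIdx n).getD j d) = l := by
  obtain ⟨hnj, hjm, -⟩ := (getD_eraseIdx_ne_getD_eraseIdx_iff d hnm j).1 hj.symm
  have hrun : ∀ k, j + 1 ≤ k → k < m → l.getD (k + 1) d = l.getD k d := fun k hjk hkm =>
    not_not.1 fun hne =>
      (getD_eraseIdx_ne_getD_eraseIdx_iff d hnm k).2 ⟨by omega, hkm, hne⟩ (hafter k hjk).symm
  rw [← eraseIdx_eq_eraseIdx_of_getD_eq d hjm (by omega) hrun, getD_eraseIdx_s19, if_neg (by omega),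
    insertIdx_eraseIdx_getD d (by omega)]

theorem getD_insertIdx_succ_eraseIdx (hmj : m ≤ j) (hj : j + 1 < l.length) :
    let c := (l.eraseIdx m).insertIdx (j + 1) (l.getD j d)
    c.getD j d = l.getD (j + 1) d ∧ c.getD (j + 1) d = l.getD j d ∧
      ∀ k, j + 1 < k → c.getD k d = l.getD k d := by
  have hlen : j + 1 ≤ (l.eraseIdx m).length := by rw [length_eraseIdx_of_lt (by omega)]; omega
  refine ⟨?_, ?_, fun k hk => ?_⟩ <;>
    simp only [getD_insertIdx d hlen, getD_eraseIdx_s19] <;> split_ifs <;>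
    first | rfl | omega | (congr 1; omega)

theorem getD_insertIdx_eraseIdx (him : i < m) (hm : m < l.length) :
    let c := (l.eraseIdx m).insertIdx i (l.getD (i + 1) d)
    c.getD i d = l.getD (i + 1) d ∧ c.getD (i + 1) d = l.getD i d ∧
      ∀ k < i, c.getD k d = l.getD k d := by
  have hlen : i ≤ (l.eraseIdx m).length := by rw [length_eraseIdx_of_lt hm]; omega
  refine ⟨?_, ?_, fun k hk => ?_⟩ <;>
    simp only [getD_insertIdx d hlen, getD_eraseIdx_s19] <;> split_ifs <;> first | rfl | omega

end List

namespace ReadVector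

def prefixWeight (x : List Bool) (t : ℤ) : ℤ := (x.take t.toNat).count true

/-- Entry `k` of `readVec ℓ x`, extended by `0` to all `k : ℤ`. -/
def readEntry (ℓ : ℕ) (x : List Bool) (k : ℤ) : ℤ :=
  prefixWeight x (k + 1) - prefixWeight x (k + 1 - ℓ)

variable {ℓ : ℕ} {x z : List Bool} {p q i j : ℕ}

theorem prefixWeight_of_nonpos (x : List Bool) {t : ℤ} (ht : t ≤ 0) : prefixWeight x t = 0 := by
  simp [prefixWeight, Int.toNat_of_nonpos ht]

theorem prefixWeight_of_length_le (x : List Bool) {t : ℤ} (ht : x.length ≤ t) :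
    prefixWeight x t = x.count true := by
  rw [prefixWeight, List.take_of_length_le (by omega)]

theorem prefixWeight_le_succ (x : List Bool) (t : ℤ) :
    prefixWeight x t ≤ prefixWeight x (t + 1) ∧
      prefixWeight x (t + 1) ≤ prefixWeight x t + 1 := by
  rcases le_or_gt (t + 1) 0 with h | h
  · rw [prefixWeight_of_nonpos x h, prefixWeight_of_nonpos x (by omega)]; omega
  · rw [prefixWeight, prefixWeight, show (t + 1).toNat = t.toNat + 1 by omega, List.take_add_one,
      List.count_append]
    rcases x[t.toNat]? with _ | _ | _ <;> simp

theorem prefixWeight_reverse (x : List Bool) (t : ℤ) :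
    prefixWeight x.reverse t = x.count true - prefixWeight x (x.length - t) := by
  rcases le_or_gt t 0 with h0 | h0
  · rw [prefixWeight_of_nonpos _ h0, prefixWeight_of_length_le x (by omega)]; ring
  rcases le_or_gt (x.length : ℤ) t with hn | hn
  · rw [prefixWeight_of_length_le _ (by simpa using hn), prefixWeight_of_nonpos x (by omega),
      List.count_reverse]; ring
  have hsplit := congrArg (List.count true) (x.take_append_drop (x.length - t.toNat))
  rw [List.count_append] at hsplit
  rw [prefixWeight, prefixWeight, List.take_reverse, List.count_reverse,
    show ((x.length : ℤ) - t).toNat = x.length - t.toNat by omega]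
  omega

theorem readEntry_reverse (x : List Bool) (k : ℤ) :
    readEntry ℓ x.reverse k = readEntry ℓ x (x.length + ℓ - 2 - k) := by
  rw [readEntry, readEntry, prefixWeight_reverse, prefixWeight_reverse,
    show (x.length : ℤ) - (k + 1) = x.length + ℓ - 2 - k + 1 - ℓ by ring,
    show (x.length : ℤ) - (k + 1 - ℓ) = x.length + ℓ - 2 - k + 1 by ring]
  ring

theorem readEntry_of_neg (x : List Bool) {k : ℤ} (hk : k < 0) : readEntry ℓ x k = 0 := by
  rw [readEntry, prefixWeight_of_nonpos x (by omega), prefixWeight_of_nonpos x (by omega), sub_zero]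

theorem count_take_padded (x : List Bool) (s : ℕ) :
    ((List.replicate (ℓ - 1) false ++ x ++ List.replicate (ℓ - 1) false).take s).count true
      = (x.take (s - (ℓ - 1))).count true := by
  simp [List.take_append, List.count_append, List.take_replicate, List.count_replicate]

theorem getD_readVec (hℓ : 1 ≤ ℓ) (x : List Bool) (k : ℕ) :
    ((readVec ℓ x).getD k 0 : ℤ) = readEntry ℓ x k := by
  by_cases hk : k < x.length + ℓ - 1
  · have hwindow := congrArg (List.count true)
      (List.take_add (l := List.replicate (ℓ - 1) false ++ x ++ List.replicate (ℓ - 1) false)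
        (i := k) (j := ℓ))
    rw [List.count_append, count_take_padded, count_take_padded] at hwindow
    simp only [readVec, List.getD_eq_getElem?_getD, List.getElem?_map, List.getElem?_range hk,
      Option.map_some, Option.getD_some]
    rw [readEntry, prefixWeight, prefixWeight,
      show ((k : ℤ) + 1).toNat = k + ℓ - (ℓ - 1) by omega,
      show ((k : ℤ) + 1 - ℓ).toNat = k - (ℓ - 1) by omega]
    omega
  · rw [List.getD_eq_default _ _ (by simp [readVec]; omega), readEntry,
      prefixWeight_of_length_le x (by omega), prefixWeight_of_length_le x (by omega)]
    simp

theorem prefixWeight_eq_of_readEntry_eq (hℓ : 1 ≤ ℓ) {a : ℤ}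
    (h : ∀ k < a, readEntry ℓ z k = readEntry ℓ x k) {t : ℤ} (ht : t ≤ a) :
    prefixWeight z t = prefixWeight x t := by
  induction hn : t.toNat using Nat.strong_induction_on generalizing t with
  | _ n ih =>
    rcases le_or_gt t 0 with h0 | h0
    · rw [prefixWeight_of_nonpos z h0, prefixWeight_of_nonpos x h0]
    · have hk := h (t - 1) (by omega)
      have hprev := ih (t - ℓ).toNat (by omega) (by omega) rfl
      rw [readEntry, readEntry, sub_add_cancel] at hk
      omega

theorem readEntry_eq_of_swap_of_agree_before (hℓ : 2 ≤ ℓ) {a : ℤ}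
    (hbefore : ∀ k < a, readEntry ℓ z k = readEntry ℓ x k)
    (hswap : readEntry ℓ z a = readEntry ℓ x (a + 1))
    (hswap' : readEntry ℓ z (a + 1) = readEntry ℓ x a) :
    readEntry ℓ x a = readEntry ℓ x (a + 1) := by
  have h₁ := prefixWeight_eq_of_readEntry_eq (by omega) hbefore (t := a + 1 - ℓ) (by omega)
  have h₂ := prefixWeight_eq_of_readEntry_eq (by omega) hbefore (t := a + 1 + 1 - ℓ) (by omega)
  have sx := prefixWeight_le_succ x (a + 1)
  have sz := prefixWeight_le_succ z (a + 1)
  have sx' := prefixWeight_le_succ x (a + 1 - ℓ)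
  rw [show a + 1 - ℓ + 1 = a + 1 + 1 - ℓ by ring] at sx'
  simp only [readEntry] at *
  omega

theorem readEntry_eq_of_swap_of_agree_after (hℓ : 2 ≤ ℓ) (hlen : z.length = x.length)
    {b : ℤ}
    (hafter : ∀ k, b + 1 < k → readEntry ℓ z k = readEntry ℓ x k)
    (hswap : readEntry ℓ z b = readEntry ℓ x (b + 1))
    (hswap' : readEntry ℓ z (b + 1) = readEntry ℓ x b) :
    readEntry ℓ x b = readEntry ℓ x (b + 1) := by
  set m : ℤ := x.length + ℓ - 2
  have hrev : ∀ y : List Bool, y.length = x.length →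
      ∀ k, readEntry ℓ y.reverse k = readEntry ℓ y (m - k) := by
    intro y hy k; rw [readEntry_reverse, hy]
  have key := readEntry_eq_of_swap_of_agree_before hℓ (x := x.reverse) (z := z.reverse)
    (a := m - b - 1) ?_ ?_ ?_
  · rw [hrev x rfl, hrev x rfl, show m - (m - b - 1) = b + 1 by ring,
      show m - (m - b - 1 + 1) = b by ring] at key
    exact key.symm
  · intro k hk
    rw [hrev x rfl, hrev z hlen]
    exact hafter _ (by omega)
  · rw [hrev x rfl, hrev z hlen, show m - (m - b - 1) = b + 1 by ring,
      show m - (m - b - 1 + 1) = b by ring, hswap']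
  · rw [hrev x rfl, hrev z hlen, show m - (m - b - 1) = b + 1 by ring,
      show m - (m - b - 1 + 1) = b by ring, hswap]

theorem getD_readVec_eq_of_swap_of_agree_before (hℓ : 2 ≤ ℓ) {a : ℕ}
    (hbefore : ∀ k < a, (readVec ℓ z).getD k 0 = (readVec ℓ x).getD k 0)
    (hswap : (readVec ℓ z).getD a 0 = (readVec ℓ x).getD (a + 1) 0)
    (hswap' : (readVec ℓ z).getD (a + 1) 0 = (readVec ℓ x).getD a 0) :
    (readVec ℓ x).getD a 0 = (readVec ℓ x).getD (a + 1) 0 := by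
  have e := getD_readVec (ℓ := ℓ) (by omega)
  apply Nat.cast_injective (R := ℤ)
  rw [e, e, Nat.cast_succ]
  apply readEntry_eq_of_swap_of_agree_before hℓ
  · intro k hk
    rcases lt_or_ge k 0 with hk0 | hk0
    · rw [readEntry_of_neg z hk0, readEntry_of_neg x hk0]
    lift k to ℕ using hk0
    rw [← e, ← e, hbefore k (by omega)]
  · rw [← Nat.cast_succ, ← e, ← e, hswap]
  · rw [← Nat.cast_succ, ← e, ← e, hswap']

theorem getD_readVec_eq_of_swap_of_agree_after (hℓ : 2 ≤ ℓ) (hlen : z.length = x.length)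
    {b : ℕ}
    (hafter : ∀ k, b + 1 < k → (readVec ℓ z).getD k 0 = (readVec ℓ x).getD k 0)
    (hswap : (readVec ℓ z).getD b 0 = (readVec ℓ x).getD (b + 1) 0)
    (hswap' : (readVec ℓ z).getD (b + 1) 0 = (readVec ℓ x).getD b 0) :
    (readVec ℓ x).getD b 0 = (readVec ℓ x).getD (b + 1) 0 := by
  have e := getD_readVec (ℓ := ℓ) (by omega)
  apply Nat.cast_injective (R := ℤ)
  rw [e, e, Nat.cast_succ]
  apply readEntry_eq_of_swap_of_agree_after hℓ hlen
  · intro k hk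
    lift k to ℕ using (by omega)
    rw [← e, ← e, hafter k (by omega)]
  · rw [← Nat.cast_succ, ← e, ← e, hswap]
  · rw [← Nat.cast_succ, ← e, ← e, hswap']

theorem readVec_candidates_of_lt (hℓ : 2 ≤ ℓ) (hpq : p < q) (hq : q < (readVec ℓ x).length)
    (hi : ((readVec ℓ x).eraseIdx p).getD i 0 ≠ ((readVec ℓ x).eraseIdx q).getD i 0)
    (hbefore : ∀ k < i,
      ((readVec ℓ x).eraseIdx p).getD k 0 = ((readVec ℓ x).eraseIdx q).getD k 0)
    (hj : ((readVec ℓ x).eraseIdx p).getD j 0 ≠ ((readVec ℓ x).eraseIdx q).getD j 0) :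
    ((readVec ℓ x).eraseIdx p).insertIdx i (((readVec ℓ x).eraseIdx q).getD i 0) =
        readVec ℓ x ∧
      ∀ z : List Bool, z.length = x.length →
        ((readVec ℓ x).eraseIdx p).insertIdx (j + 1) (((readVec ℓ x).eraseIdx q).getD j 0) ≠
          readVec ℓ z := by
  refine ⟨List.insertIdx_eraseIdx_eq_of_first_ne 0 hpq hq hi hbefore, fun z hz hzc => ?_⟩
  obtain ⟨hpj, hjq, hjump⟩ := (List.getD_eraseIdx_ne_getD_eraseIdx_iff 0 hpq j).1 hj
  rw [List.getD_eraseIdx_s19, if_pos hjq] at hzc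
  obtain ⟨hswap, hswap', hafter⟩ :=
    List.getD_insertIdx_succ_eraseIdx 0 (l := readVec ℓ x) hpj (by omega)
  rw [hzc] at hswap hswap' hafter
  exact hjump (getD_readVec_eq_of_swap_of_agree_after hℓ hz hafter hswap hswap').symm

theorem readVec_candidates_of_gt (hℓ : 2 ≤ ℓ) (hqp : q < p) (hp : p < (readVec ℓ x).length)
    (hi : ((readVec ℓ x).eraseIdx p).getD i 0 ≠ ((readVec ℓ x).eraseIdx q).getD i 0)
    (hj : ((readVec ℓ x).eraseIdx p).getD j 0 ≠ ((readVec ℓ x).eraseIdx q).getD j 0)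
    (hafter : ∀ k, j < k →
      ((readVec ℓ x).eraseIdx p).getD k 0 = ((readVec ℓ x).eraseIdx q).getD k 0) :
    ((readVec ℓ x).eraseIdx p).insertIdx (j + 1) (((readVec ℓ x).eraseIdx q).getD j 0) =
        readVec ℓ x ∧
      ∀ z : List Bool, z.length = x.length →
        ((readVec ℓ x).eraseIdx p).insertIdx i (((readVec ℓ x).eraseIdx q).getD i 0) ≠
          readVec ℓ z := by
  refine ⟨List.insertIdx_succ_eraseIdx_eq_of_last_ne 0 hqp hp hj hafter, fun z hz hzc => ?_⟩
  obtain ⟨hqi, hip, hjump⟩ := (List.getD_eraseIdx_ne_getD_eraseIdx_iff 0 hqp i).1 hi.symm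
  rw [List.getD_eraseIdx_s19, if_neg (by omega)] at hzc
  obtain ⟨hswap, hswap', hbefore⟩ := List.getD_insertIdx_eraseIdx 0 hip hp
  rw [hzc] at hswap hswap' hbefore
  exact hjump (getD_readVec_eq_of_swap_of_agree_before hℓ hbefore hswap hswap').symm

end ReadVector

/-- Let `ℓ ≥ 2`, `x ∈ {0,1}ⁿ`, and let `R'` and `R''` be two distinct
vectors in `D(Tr(x))`. Let `i` and `j` be, respectively, the first and last indices at
which `R'` and `R''` disagree (0-indexed), and define the two candidates
`R̂ = (R'_1,…,R'_{i−1}, R''_i, R'_i,…)` (insert `R''_i` before position `i` of `R'`) and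
`R̃ = (R'_1,…,R'_j, R''_j, R'_{j+1},…)` (insert `R''_j` after position `j` of `R'`).
Then exactly one of `R̂, R̃` is the `ℓ`-read vector of some binary vector of length `n`,
and that candidate equals `Tr(x)`. -/
theorem reconstruction_from_two_reads (ℓ n : ℕ) (hℓ : 2 ≤ ℓ) (x : List Bool)
    (hx : x.length = n) (R R' : List ℕ) (hne : R ≠ R')
    (hR : R ∈ delBall (readVec ℓ x)) (hR' : R' ∈ delBall (readVec ℓ x))
    (i j : ℕ)
    (hi : R.getD i 0 ≠ R'.getD i 0 ∧ ∀ k < i, R.getD k 0 = R'.getD k 0)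
    (hj : R.getD j 0 ≠ R'.getD j 0 ∧ ∀ k, j < k → R.getD k 0 = R'.getD k 0) :
    ((∃ z : List Bool, z.length = n ∧ R.insertIdx i (R'.getD i 0) = readVec ℓ z) ∧
      ¬ (∃ z : List Bool, z.length = n ∧ R.insertIdx (j + 1) (R'.getD j 0) = readVec ℓ z) ∧
      R.insertIdx i (R'.getD i 0) = readVec ℓ x) ∨
    (¬ (∃ z : List Bool, z.length = n ∧ R.insertIdx i (R'.getD i 0) = readVec ℓ z) ∧
      (∃ z : List Bool, z.length = n ∧ R.insertIdx (j + 1) (R'.getD j 0) = readVec ℓ z) ∧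
      R.insertIdx (j + 1) (R'.getD j 0) = readVec ℓ x) := by
  subst hx
  obtain ⟨p, hp, rfl⟩ := hR
  obtain ⟨q, hq, rfl⟩ := hR'
  rcases lt_trichotomy p q with hpq | rfl | hqp
  · obtain ⟨htrue, hfalse⟩ := ReadVector.readVec_candidates_of_lt hℓ hpq hq hi.1 hi.2 hj.1
    exact Or.inl ⟨⟨x, rfl, htrue⟩, fun ⟨z, hz, hzc⟩ => hfalse z hz hzc, htrue⟩
  · exact absurd rfl hne
  · obtain ⟨htrue, hfalse⟩ := ReadVector.readVec_candidates_of_gt hℓ hqp hp hi.1 hj.1 hj.2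
    exact Or.inr ⟨fun ⟨z, hz, hzc⟩ => hfalse z hz hzc, ⟨x, rfl, htrue⟩, htrue⟩
end
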